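/- For any unitary Grothendieck–Green functor G on the category of varieties (a Mackey functor with exterior products, unit 1_G ∈ G(pt), and the additivity property p_Y^*(1_G) = i_{Y∖Z,*} i_{Y∖Z}^* p_Y^*(1_G) + i_{Z,*} i_Z^* p_Y^*(1_G) for closed Z ⊆ Y), the assignment τ_X([W →ʰ X]) := h_* p_W^*(1_G) is a well-defined group homomorphism τ_X : K₀(𝒱/X) → G(X), i.e., it respects the scissor relations of K₀(𝒱/X). -/
import Mathlib

open CategoryTheory CategoryTheory.Limits

theorem tau_respects_scissor_relation
    {C : Type*} [Category C] [HasTerminal C]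
    (G : C → Type*) [∀ X : C, AddCommGroup (G X)]
    (push : ∀ {X Y : C}, (X ⟶ Y) → (G X →+ G Y))
    (pull : ∀ {X Y : C}, (X ⟶ Y) → (G Y →+ G X))
    -- functoriality of pushforward and pullback
    (hpush_comp : ∀ {X Y Z : C} (f : X ⟶ Y) (g : Y ⟶ Z) (a : G X),
      push (f ≫ g) a = push g (push f a))
    (hpull_comp : ∀ {X Y Z : C} (f : X ⟶ Y) (g : Y ⟶ Z) (a : G Z),
      pull (f ≫ g) a = pull f (pull g a))
    -- the unit `1_G ∈ G(pt)`
    (one : G (⊤_ C))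
    -- a closed-open decomposition of `Y` into `Z` and `U = Y∖Z`, and `h : Y ⟶ X`
    {X Y Z U : C} (h : Y ⟶ X) (iZ : Z ⟶ Y) (iU : U ⟶ Y)
    -- the additivity property of the Grothendieck–Green functor for this decomposition
    (hadd : pull (terminal.from Y) one
      = push iU (pull iU (pull (terminal.from Y) one))
        + push iZ (pull iZ (pull (terminal.from Y) one))) :
    push h (pull (terminal.from Y) one)
      = push (iZ ≫ h) (pull (terminal.from Z) one)
        + push (iU ≫ h) (pull (terminal.from U) one) := by
  have hZ : terminal.from Z = iZ ≫ terminal.from Y := Subsingleton.elim _ _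
  have hU : terminal.from U = iU ≫ terminal.from Y := Subsingleton.elim _ _
  rw [hZ, hU, hpull_comp, hpull_comp, hpush_comp, hpush_comp]
  conv_lhs => rw [hadd]
  rw [map_add]
  exact add_comm _ _
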